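/- arXiv:1803.08137 — 2 statements merged into one kernel-verified Lean document; each statement's English description precedes it below -/
import Mathlib

section
/- Let ℒ : ℝ^{n+s} → ℝ be differentiable with L-Lipschitz gradient (with respect to the Euclidean norm), L > 0. Write each point p ∈ ℝ^{n+s} as p = (p_f, p_k) with p_f ∈ ℝ^n, p_k ∈ ℝ^s. Then for all x, y ∈ ℝ^{n+s} whose k-components x_k, y_k lie in the probability simplex Δ = {u ∈ ℝ^s : u_i ≥ 0, ∑_i u_i = 1} with y_k having strictly positive coordinates, one has ℒ(x) ≤ ℒ(y) + ⟨∇ℒ(y), x − y⟩ + (L/2)‖x_f − y_f‖₂² + L·KL(x_k‖y_k), where KL(u‖v) := ∑_i u_i log(u_i/v_i). -/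
/-!
Descent lemma: by Cauchy–Schwarz and the Lipschitz bound on the gradient,
`t ↦ ℒ (y + t (x - y)) - t ⟪∇ℒ y, x - y⟫ - (L/2) t² ‖x - y‖²` has nonpositive derivative for
`t ≥ 0`, so its value at `1` is at most its value at `0`. Then split `‖x - y‖²` into its `f`- and
`k`-blocks. Instead of Pinsker and `‖·‖₂ ≤ ‖·‖₁`, the simplex block is bounded coordinatewise:
`(u - v)²/2 ≤ u log (u/v) - u + v` for `u, v ∈ [0, 1]`, because the difference of the two sides
has `u`-derivative `(log u - u) - (log v - v)`, which changes sign only at `u = v` as `log t - t`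
is increasing on `(0, 1]`. Summing, with `∑ u = ∑ v = 1`, gives `‖u - v‖₂² ≤ 2 KL(u‖v)`.
-/

open scoped RealInnerProductSpace

/-- Kullback–Leibler divergence `KL(u‖v) = ∑ i, u i * log (u i / v i)`
(with the convention `0 · log 0 = 0`). -/
noncomputable def KLdiv {s : ℕ} (u v : Fin s → ℝ) : ℝ :=
  ∑ i, u i * Real.log (u i / v i)

open Real Set
open scoped NNReal

section Descent

variable {E : Type*} [NormedAddCommGroup E] [InnerProductSpace ℝ E] [CompleteSpace E] {f : E → ℝ}

theorem hasDerivAt_comp_add_smul {y d : E} {t : ℝ} (hf : DifferentiableAt ℝ f (y + t • d)) :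
    HasDerivAt (fun t : ℝ => f (y + t • d)) ⟪gradient f (y + t • d), d⟫ t := by
  have hline : HasDerivAt (fun t : ℝ => y + t • d) d t := by
    simpa using ((hasDerivAt_id t).smul_const d).const_add y
  exact (hasGradientAt_iff_hasFDerivAt.mp hf.hasGradientAt).comp_hasDerivAt t hline

theorem le_add_inner_gradient_add_mul_norm_sq {K : ℝ≥0} (hf : Differentiable ℝ f)
    (hK : LipschitzWith K (gradient f)) (x y : E) :
    f x ≤ f y + ⟪gradient f y, x - y⟫ + K / 2 * ‖x - y‖ ^ 2 := by
  set d := x - y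
  let φ : ℝ → ℝ := fun t => f (y + t • d) - t * ⟪gradient f y, d⟫ - K / 2 * t ^ 2 * ‖d‖ ^ 2
  have hφ : ∀ t, HasDerivAt φ (⟪gradient f (y + t • d) - gradient f y, d⟫ - K * t * ‖d‖ ^ 2) t := by
    intro t
    have := ((hasDerivAt_comp_add_smul (hf (y + t • d))).sub
      ((hasDerivAt_id' t).mul_const ⟪gradient f y, d⟫)).sub
      (((hasDerivAt_pow 2 t).const_mul ((K : ℝ) / 2)).mul_const (‖d‖ ^ 2))
    refine this.congr_deriv ?_
    simp only [inner_sub_left, Nat.cast_ofNat, Nat.add_one_sub_one, pow_one]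
    ring
  have hinner_le : ∀ t, 0 ≤ t → ⟪gradient f (y + t • d) - gradient f y, d⟫ ≤ K * t * ‖d‖ ^ 2 := by
    intro t ht
    have hgrad : ‖gradient f (y + t • d) - gradient f y‖ ≤ K * ‖t • d‖ := by
      simpa [dist_eq_norm] using hK.dist_le_mul (y + t • d) y
    calc ⟪gradient f (y + t • d) - gradient f y, d⟫
        ≤ ‖gradient f (y + t • d) - gradient f y‖ * ‖d‖ := real_inner_le_norm _ _
      _ ≤ K * ‖t • d‖ * ‖d‖ := by gcongr
      _ = K * t * ‖d‖ ^ 2 := by rw [norm_smul, Real.norm_of_nonneg ht]; ring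
  have hanti : AntitoneOn φ (Icc 0 1) :=
    antitoneOn_of_hasDerivWithinAt_nonpos (convex_Icc 0 1)
      (fun t _ => (hφ t).continuousAt.continuousWithinAt)
      (fun t _ => (hφ t).hasDerivWithinAt)
      (fun t ht => sub_nonpos.2 (hinner_le t (interior_subset ht).1))
  have hφ10 := hanti (left_mem_Icc.2 zero_le_one) (right_mem_Icc.2 zero_le_one) zero_le_one
  have hyd : y + d = x := add_sub_cancel y x
  simp only [φ, hyd, one_smul, zero_smul, add_zero, one_mul, one_pow, mul_one, zero_mul,
    ne_eq, OfNat.ofNat_ne_zero, not_false_eq_true, zero_pow, mul_zero, sub_zero] at hφ10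
  linarith

end Descent

theorem monotoneOn_log_sub_self : MonotoneOn (fun t => log t - t) (Ioc 0 1) := by
  intro s hs t ht hst
  have hs0 : 0 < s := hs.1
  have ht0 : 0 < t := ht.1
  have hlog : log (s / t) ≤ s / t - 1 := log_le_sub_one_of_pos (div_pos hs0 ht0)
  have hdiv : s / t - 1 ≤ s - t := by
    rw [div_sub_one ht0.ne', div_le_iff₀ ht0]
    nlinarith [ht.2]
  rw [log_div hs0.ne' ht0.ne'] at hlog
  linarith

theorem sq_sub_div_two_le_mul_log_div_sub_add {u v : ℝ} (hu : u ∈ Icc 0 1) (hv : v ∈ Ioc 0 1) :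
    (u - v) ^ 2 / 2 ≤ u * log (u / v) - u + v := by
  let h : ℝ → ℝ := fun t => t * log t - t * log v - t + v - (t - v) ^ 2 / 2
  have hderiv : ∀ t, 0 < t → HasDerivAt h ((log t - t) - (log v - v)) t := by
    intro t ht
    have := ((((hasDerivAt_mul_log ht.ne').sub ((hasDerivAt_id' t).mul_const (log v))).sub
      (hasDerivAt_id' t)).add_const v).sub ((((hasDerivAt_id' t).sub_const v).pow 2).div_const 2)
    exact this.congr_deriv (by norm_num; ring)
  have hcont : Continuous h := by
    unfold h
    have := continuous_mul_log
    fun_prop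
  have hmin : IsMinOn h (Icc 0 1) v :=
    isMinOn_Icc_of_deriv hcont.continuousAt hcont.continuousAt hcont.continuousAt
      (fun t ht => (hderiv t ht.1).differentiableAt.differentiableWithinAt)
      (fun t ht => (hderiv t (hv.1.trans ht.1)).differentiableAt.differentiableWithinAt)
      (fun t ht => by
        rw [(hderiv t ht.1).deriv]
        exact sub_nonpos.2 (monotoneOn_log_sub_self ⟨ht.1, ht.2.le.trans hv.2⟩ hv ht.2.le))
      (fun t ht => by
        rw [(hderiv t (hv.1.trans ht.1)).deriv]
        exact sub_nonneg.2 (monotoneOn_log_sub_self hv ⟨hv.1.trans ht.1, ht.2.le⟩ ht.1.le))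
  have hhu : h v ≤ h u := hmin hu
  have hlog : u * log (u / v) = u * log u - u * log v := by
    rcases hu.1.eq_or_lt with rfl | hu0
    · simp
    rw [log_div hu0.ne' hv.1.ne']
    ring
  simp only [h, sub_self] at hhu
  linarith

theorem sum_sq_sub_le_two_mul_KLdiv {s : ℕ} {u v : Fin s → ℝ} (hu : u ∈ stdSimplex ℝ (Fin s))
    (hv : v ∈ stdSimplex ℝ (Fin s)) (hv_pos : ∀ i, 0 < v i) :
    ∑ i, (u i - v i) ^ 2 ≤ 2 * KLdiv u v := by
  have hKL : KLdiv u v = ∑ i, (u i * log (u i / v i) - u i + v i) := by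
    rw [Finset.sum_add_distrib, Finset.sum_sub_distrib, hu.2, hv.2, KLdiv]
    ring
  rw [hKL, Finset.mul_sum]
  refine Finset.sum_le_sum fun i _ => ?_
  have := sq_sub_div_two_le_mul_log_div_sub_add (mem_Icc_of_mem_stdSimplex hu i)
    ⟨hv_pos i, (mem_Icc_of_mem_stdSimplex hv i).2⟩
  linarith

theorem EuclideanSpace.norm_sq_eq_sum_castAdd_add_sum_natAdd {n s : ℕ}
    (z : EuclideanSpace ℝ (Fin (n + s))) :
    ‖z‖ ^ 2 = ∑ i : Fin n, z (Fin.castAdd s i) ^ 2 + ∑ i : Fin s, z (Fin.natAdd n i) ^ 2 := by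
  simp only [EuclideanSpace.norm_sq_eq, Real.norm_eq_abs, sq_abs]
  exact Fin.sum_univ_add (fun i => z i ^ 2)

/-- The surrogate upper bound of Theorem 1 (with the correct Pinsker constant):
if `ℒ : ℝ^{n+s} → ℝ` is differentiable with `L`-Lipschitz gradient, then for points
`x = (x_f, x_k)`, `y = (y_f, y_k)` whose `k`-components lie in the probability simplex
(with `y_k` strictly positive),
`ℒ(x) ≤ ℒ(y) + ⟨∇ℒ(y), x − y⟩ + (L/2)‖x_f − y_f‖₂² + L·KL(x_k‖y_k)`. -/
theorem surrogate_upper_bound (n s : ℕ) (L : ℝ) (hL : 0 < L)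
    (ℒ : EuclideanSpace ℝ (Fin (n + s)) → ℝ)
    (hdiff : Differentiable ℝ ℒ)
    (hlip : LipschitzWith L.toNNReal (gradient ℒ))
    (x y : EuclideanSpace ℝ (Fin (n + s)))
    (hxk_nonneg : ∀ i : Fin s, 0 ≤ x (Fin.natAdd n i))
    (hxk_sum : ∑ i : Fin s, x (Fin.natAdd n i) = 1)
    (hyk_pos : ∀ i : Fin s, 0 < y (Fin.natAdd n i))
    (hyk_sum : ∑ i : Fin s, y (Fin.natAdd n i) = 1) :
    ℒ x ≤ ℒ y + ⟪gradient ℒ y, x - y⟫ +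
        (L / 2) * ∑ i : Fin n, (x (Fin.castAdd s i) - y (Fin.castAdd s i)) ^ 2 +
        L * KLdiv (fun i => x (Fin.natAdd n i)) (fun i => y (Fin.natAdd n i)) := by
  have hdescent := le_add_inner_gradient_add_mul_norm_sq hdiff hlip x y
  rw [Real.coe_toNNReal L hL.le, EuclideanSpace.norm_sq_eq_sum_castAdd_add_sum_natAdd] at hdescent
  have hpinsker := sum_sq_sub_le_two_mul_KLdiv ⟨hxk_nonneg, hxk_sum⟩
    ⟨fun i => (hyk_pos i).le, hyk_sum⟩ hyk_pos
  simp only [PiLp.sub_apply] at hdescent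
  linarith [mul_le_mul_of_nonneg_left hpinsker hL.le]
end

section
/- Let s ≥ 1 and let k⁰ ∈ ℝ^s be the uniform vector k⁰_i = 1/s for all i. Let g, α ∈ ℝ^s with α_i ≥ 0 for all i, let η > 0, and set ᾱ := max_i α_i. Define the PRIDA kernel updates computed from the true gradient g and the noisy gradient g + α: k¹_g := x/‖x‖₁ with x_i = k⁰_i e^{−η g_i}, and k¹_h := y/‖y‖₁ with y_i = k⁰_i e^{−η(g_i + α_i)}. Then ‖k¹_g − k¹_h‖₁ ≤ 2η ᾱ. In particular, if ᾱ ≤ δ/(2η) for some δ > 0, then the iterates computed with the noisy and true gradients are at most δ apart in the ℓ₁ norm. -/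
/-
Write `x_i = k_i e^{-η g_i}` and `y_i = x_i e^{-η α_i}` for the unnormalized weights, with sums
`X` and `Y`. Nonnegative noise gives `0 < y_i ≤ x_i`, and then the triangle inequality through
`y_i / X` bounds the ℓ₁ distance of the normalized vectors by `2 (X - Y) / X`. Finally
`1 - e^{-t} ≤ t` gives `X - Y ≤ η ᾱ X`.
-/

/-- The PRIDA kernel update from `k` with gradient `v` and step size `η`:
multiplicative update `k_i e^{−η v_i}` followed by ℓ₁-normalization. -/
noncomputable def pridaUpdate {s : ℕ} (k v : Fin s → ℝ) (η : ℝ) : Fin s → ℝ :=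
  fun i => k i * Real.exp (-(η * v i)) / ∑ j, |k j * Real.exp (-(η * v j))|

open Finset Real

lemma sum_abs_div_sum_sub_div_sum_le {ι : Type*} [Fintype ι] {x y : ι → ℝ}
    (hy : ∀ i, 0 < y i) (hyx : ∀ i, y i ≤ x i) :
    ∑ i, |x i / ∑ j, x j - y i / ∑ j, y j| ≤ 2 * ((∑ j, x j - ∑ j, y j) / ∑ j, x j) := by
  rcases isEmpty_or_nonempty ι with _ | _
  · simp
  set X := ∑ j, x j
  set Y := ∑ j, y j
  have hY : 0 < Y := sum_pos (fun i _ => hy i) univ_nonempty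
  have hYX : Y ≤ X := sum_le_sum fun i _ => hyx i
  have hX : 0 < X := hY.trans_le hYX
  have hterm : ∀ i, |x i / X - y i / Y| ≤ (x i - y i) / X + y i * (1 / Y - 1 / X) := by
    intro i
    calc |x i / X - y i / Y| ≤ |x i / X - y i / X| + |y i / X - y i / Y| := abs_sub_le _ _ _
      _ = (x i - y i) / X + y i * (1 / Y - 1 / X) := by
        rw [← sub_div, abs_of_nonneg (div_nonneg (sub_nonneg.2 (hyx i)) hX.le), abs_sub_comm,
          abs_of_nonneg (sub_nonneg.2 (div_le_div_of_nonneg_left (hy i).le hY hYX))]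
        ring
  calc ∑ i, |x i / X - y i / Y| ≤ ∑ i, ((x i - y i) / X + y i * (1 / Y - 1 / X)) :=
        sum_le_sum fun i _ => hterm i
    _ = (X - Y) / X + Y * (1 / Y - 1 / X) := by
        rw [sum_add_distrib, ← sum_div, sum_sub_distrib, ← sum_mul]
    _ = 2 * ((X - Y) / X) := by field_simp; ring

lemma sum_sub_sum_mul_exp_neg_le {ι : Type*} [Fintype ι] {x a : ι → ℝ} {c : ℝ}
    (hx : ∀ i, 0 ≤ x i) (hac : ∀ i, a i ≤ c) :
    ∑ i, x i - ∑ i, x i * exp (-a i) ≤ c * ∑ i, x i := by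
  rw [← sum_sub_distrib, mul_sum]
  refine sum_le_sum fun i _ => ?_
  have h_exp : 1 - exp (-a i) ≤ c := by linarith [add_one_le_exp (-a i), hac i]
  nlinarith [hx i]

lemma pridaUpdate_of_pos {s : ℕ} {k : Fin s → ℝ} (hk : ∀ i, 0 < k i) (v : Fin s → ℝ) (η : ℝ) :
    pridaUpdate k v η = fun i => k i * exp (-(η * v i)) / ∑ j, k j * exp (-(η * v j)) := by
  funext i
  simp only [pridaUpdate, abs_of_pos (mul_pos (hk _) (exp_pos _))]

lemma sum_abs_pridaUpdate_sub_pridaUpdate_add_le {s : ℕ} {k : Fin s → ℝ} (hk : ∀ i, 0 < k i)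
    (g : Fin s → ℝ) {α : Fin s → ℝ} (hα : ∀ i, 0 ≤ α i) {η : ℝ} (hη : 0 ≤ η) :
    ∑ i, |pridaUpdate k g η i - pridaUpdate k (g + α) η i| ≤ 2 * η * ⨆ i, α i := by
  set x : Fin s → ℝ := fun i => k i * exp (-(η * g i))
  have hx : ∀ i, 0 < x i := fun i => mul_pos (hk i) (exp_pos _)
  have hy : ∀ i, k i * exp (-(η * (g + α) i)) = x i * exp (-(η * α i)) := by
    intro i
    simp only [x, Pi.add_apply, mul_assoc, ← exp_add]
    ring_nf
  have hyx : ∀ i, x i * exp (-(η * α i)) ≤ x i := fun i =>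
    mul_le_of_le_one_right (hx i).le (exp_le_one_iff.2 (by nlinarith [hα i]))
  have hαbdd : ∀ i, η * α i ≤ η * ⨆ j, α j := fun i =>
    mul_le_mul_of_nonneg_left (le_ciSup (Set.finite_range α).bddAbove i) hη
  have hratio : (∑ i, x i - ∑ i, x i * exp (-(η * α i))) / ∑ i, x i ≤ η * ⨆ j, α j :=
    div_le_of_le_mul₀ (sum_nonneg fun i _ => (hx i).le)
      (mul_nonneg hη (iSup_nonneg hα))
      (sum_sub_sum_mul_exp_neg_le (fun i => (hx i).le) hαbdd)
  rw [pridaUpdate_of_pos hk, pridaUpdate_of_pos hk]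
  simp only [hy]
  calc _ ≤ 2 * ((∑ i, x i - ∑ i, x i * exp (-(η * α i))) / ∑ i, x i) :=
        sum_abs_div_sum_sub_div_sum_le (fun i => mul_pos (hx i) (exp_pos _)) hyx
    _ ≤ 2 * η * ⨆ i, α i := by linarith

theorem prida_update_robust_general (s : ℕ)
    (k0 : Fin s → ℝ) (hk0 : ∀ i, k0 i = 1 / (s : ℝ))
    (g α : Fin s → ℝ) (hα : ∀ i, 0 ≤ α i) (η : ℝ) (hη : 0 < η) :
    (∑ i, |pridaUpdate k0 g η i - pridaUpdate k0 (g + α) η i| ≤ 2 * η * (⨆ i, α i)) ∧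
    (∀ δ : ℝ, 0 < δ → (⨆ i, α i) ≤ δ / (2 * η) →
      ∑ i, |pridaUpdate k0 g η i - pridaUpdate k0 (g + α) η i| ≤ δ) := by
  have hk0pos : ∀ i, 0 < k0 i := fun i => by
    have : (0 : ℝ) < s := Nat.cast_pos.2 (Fin.pos i)
    rw [hk0]; positivity
  have hbound := sum_abs_pridaUpdate_sub_pridaUpdate_add_le hk0pos g hα hη.le
  refine ⟨hbound, fun δ _ hδ => hbound.trans ?_⟩
  calc 2 * η * ⨆ i, α i ≤ 2 * η * (δ / (2 * η)) := by gcongr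
    _ = δ := by field_simp

/-- Lemma 2 (robustness of PRIDA): starting from the uniform kernel `k⁰_i = 1/s`, the
kernel updates computed with the true gradient `g` and the noisy gradient `g + α`
(nonnegative noise, `ᾱ = max_i α_i`) satisfy `‖k¹_g − k¹_h‖₁ ≤ 2ηᾱ`; in particular, if
`ᾱ ≤ δ/(2η)` then the two iterates are at most `δ` apart in the ℓ₁ norm. -/
theorem prida_update_robust (s : ℕ) (hs : 1 ≤ s)
    (k0 : Fin s → ℝ) (hk0 : ∀ i, k0 i = 1 / (s : ℝ))
    (g α : Fin s → ℝ) (hα : ∀ i, 0 ≤ α i) (η : ℝ) (hη : 0 < η) :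
    (∑ i, |pridaUpdate k0 g η i - pridaUpdate k0 (g + α) η i| ≤ 2 * η * (⨆ i, α i)) ∧
    (∀ δ : ℝ, 0 < δ → (⨆ i, α i) ≤ δ / (2 * η) →
      ∑ i, |pridaUpdate k0 g η i - pridaUpdate k0 (g + α) η i| ≤ δ) :=
  prida_update_robust_general s k0 hk0 g α hα η hη
end
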